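/- Let (X, 𝔐) be a measurable space, d ≥ 1, α > 0, λ ≥ 0, ε ≥ 0, and set c := 1/(2α(1+λ)). Let μ̂ and μ⋆ be probability measures on X, and let δ̂, û, δ⋆, u⋆ : X → ℝ^d be measurable with ‖δ̂‖², ‖û‖² integrable with respect to μ̂ and ‖δ⋆‖², ‖u⋆‖² integrable with respect to μ⋆. Assume: (i) ∫‖û − c·δ̂‖² dμ̂ ≤ ε² and ∫‖u⋆ − c·δ⋆‖² dμ⋆ ≤ ε²; (ii) ∫(⟨û, δ̂⟩ − α‖û‖²) dμ̂ ≤ ∫(⟨u⋆, δ⋆⟩ − α‖u⋆‖²) dμ⋆. Then ∫‖δ̂‖² dμ̂ ≤ (1+λ)² ∫‖δ⋆‖² dμ⋆ + 2α²(1+λ)²(2+λ)·ε². -/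
import Mathlib


open MeasureTheory RealInnerProductSpace

section CosimAux

variable {E : Type*} [NormedAddCommGroup E] [InnerProductSpace ℝ E]

lemma cosim_aux_star (α : ℝ) (hα : 0 < α) (u δ : E) :
    ⟪u, δ⟫ - α * ‖u‖ ^ 2 ≤ ‖δ‖ ^ 2 / (4 * α) := by
  rw [← sub_nonneg]
  have h1 : ‖δ‖ ^ 2 / (4 * α) - (⟪u, δ⟫ - α * ‖u‖ ^ 2)
      = (2 * α * ‖u‖ - ‖δ‖) ^ 2 / (4 * α) + (‖u‖ * ‖δ‖ - ⟪u, δ⟫) := by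
    field_simp; ring
  rw [h1]
  have h2 := real_inner_le_norm u δ
  have h3 : (0:ℝ) ≤ (2 * α * ‖u‖ - ‖δ‖) ^ 2 / (4 * α) := by positivity
  linarith

lemma cosim_aux_hat (α lam c : ℝ) (hα : 0 < α) (hlam : 0 ≤ lam)
    (hc : c = 1 / (2 * α * (1 + lam))) (u δ : E) :
    ‖δ‖ ^ 2 / (4 * α * (1 + lam) ^ 2) - α * (2 + lam) / 2 * ‖u - c • δ‖ ^ 2
      ≤ ⟪u, δ⟫ - α * ‖u‖ ^ 2 := by
  have h1 : (0:ℝ) < 1 + lam := by linarith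
  set p := ‖δ‖ with hp
  set q := ‖u - c • δ‖ with hq
  set r := ⟪u - c • δ, δ⟫ with hrr
  have hip : ⟪u, δ⟫ = c * p ^ 2 + r := by
    rw [hrr, inner_sub_left, real_inner_smul_left, real_inner_self_eq_norm_sq, hp]; ring
  have hnu : ‖u‖ ^ 2 = c ^ 2 * p ^ 2 + 2 * c * r + q ^ 2 := by
    have hu : c • δ + (u - c • δ) = u := by abel
    calc ‖u‖ ^ 2 = ‖c • δ + (u - c • δ)‖ ^ 2 := by rw [hu]
    _ = ‖c • δ‖ ^ 2 + 2 * ⟪c • δ, u - c • δ⟫ + ‖u - c • δ‖ ^ 2 := norm_add_sq_real _ _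
    _ = c ^ 2 * p ^ 2 + 2 * c * r + q ^ 2 := by
        rw [norm_smul, Real.norm_eq_abs, real_inner_smul_left, real_inner_comm]
        rw [mul_pow, sq_abs, ← hp, ← hq, ← hrr]; ring
  rw [hip, hnu, ← sub_nonneg]
  have hid : c * p ^ 2 + r - α * (c ^ 2 * p ^ 2 + 2 * c * r + q ^ 2)
      - (p ^ 2 / (4 * α * (1 + lam) ^ 2) - α * (2 + lam) / 2 * q ^ 2)
      = lam / (2 * α * (1 + lam) ^ 2) * (p - α * (1 + lam) * q) ^ 2
        + lam / (1 + lam) * (r + q * p) := by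
    subst hc; field_simp; ring
  rw [hid]
  have habs := abs_real_inner_le_norm (u - c • δ) δ
  have hrqp : 0 ≤ r + q * p := by
    rw [abs_le] at habs; rw [hrr, hq, hp]; linarith [habs.1]
  have h2 : 0 ≤ lam / (1 + lam) * (r + q * p) := by positivity
  positivity

lemma cosim_inner_integrable {X : Type*} [MeasurableSpace X] (μ : Measure X)
    (u δ : X → E) [MeasurableSpace E] [OpensMeasurableSpace E]
    [SecondCountableTopology E]
    (hum : Measurable u) (hδm : Measurable δ)
    (hu : Integrable (fun x => ‖u x‖ ^ 2) μ)
    (hδ : Integrable (fun x => ‖δ x‖ ^ 2) μ) :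
    Integrable (fun x => ⟪u x, δ x⟫) μ := by
  refine Integrable.mono' (hu.add hδ) (hum.inner hδm).aestronglyMeasurable ?_
  filter_upwards with x
  have h1 := abs_real_inner_le_norm (u x) (δ x)
  have h2 := sq_nonneg (‖u x‖ - ‖δ x‖)
  simp only [Pi.add_apply, Real.norm_eq_abs]
  nlinarith

end CosimAux

/-- Core inequality behind Proposition 4.2 (one-step error bound of CoSIM):
if the auxiliary fields are `ε`-accurate approximations of the shifted optima
`c·δ` with `c = 1/(2α(1+λ))` (hypothesis (i)), and the inexact solution
minimizes the first-stage objective no worse than the optimal one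
(hypothesis (ii)), then `∫‖δ̂‖² dμ̂ ≤ (1+λ)² ∫‖δ⋆‖² dμ⋆ + 2α²(1+λ)²(2+λ)ε²`. -/
theorem cosim_one_step_error_bound
    {X : Type*} [MeasurableSpace X]
    (d : ℕ) (hd : 1 ≤ d)
    (α lam ε : ℝ) (hα : 0 < α) (hlam : 0 ≤ lam) (hε : 0 ≤ ε)
    (c : ℝ) (hc : c = 1 / (2 * α * (1 + lam)))
    (μh μs : Measure X) [IsProbabilityMeasure μh] [IsProbabilityMeasure μs]
    (δh uh δs us : X → EuclideanSpace ℝ (Fin d))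
    (hδhm : Measurable δh) (huhm : Measurable uh)
    (hδsm : Measurable δs) (husm : Measurable us)
    (hδh : Integrable (fun x => ‖δh x‖ ^ 2) μh)
    (huh : Integrable (fun x => ‖uh x‖ ^ 2) μh)
    (hδs : Integrable (fun x => ‖δs x‖ ^ 2) μs)
    (hus : Integrable (fun x => ‖us x‖ ^ 2) μs)
    (hacc_h : ∫ x, ‖uh x - c • δh x‖ ^ 2 ∂μh ≤ ε ^ 2)
    (hacc_s : ∫ x, ‖us x - c • δs x‖ ^ 2 ∂μs ≤ ε ^ 2)
    (hopt : ∫ x, (⟪uh x, δh x⟫ - α * ‖uh x‖ ^ 2) ∂μh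
        ≤ ∫ x, (⟪us x, δs x⟫ - α * ‖us x‖ ^ 2) ∂μs) :
    ∫ x, ‖δh x‖ ^ 2 ∂μh
      ≤ (1 + lam) ^ 2 * ∫ x, ‖δs x‖ ^ 2 ∂μs
        + 2 * α ^ 2 * (1 + lam) ^ 2 * (2 + lam) * ε ^ 2 := by
  have h1 : (0:ℝ) < 1 + lam := by linarith
  -- integrability facts
  have hinnh : Integrable (fun x => ⟪uh x, δh x⟫) μh :=
    cosim_inner_integrable μh uh δh huhm hδhm huh hδh
  have hinns : Integrable (fun x => ⟪us x, δs x⟫) μs :=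
    cosim_inner_integrable μs us δs husm hδsm hus hδs
  have hIhat : Integrable (fun x => ⟪uh x, δh x⟫ - α * ‖uh x‖ ^ 2) μh :=
    hinnh.sub (huh.const_mul α)
  have hIstar : Integrable (fun x => ⟪us x, δs x⟫ - α * ‖us x‖ ^ 2) μs :=
    hinns.sub (hus.const_mul α)
  have heh : Integrable (fun x => ‖uh x - c • δh x‖ ^ 2) μh := by
    have heq : (fun x => ‖uh x - c • δh x‖ ^ 2)
        = fun x => ‖uh x‖ ^ 2 - 2 * c * ⟪uh x, δh x⟫ + c ^ 2 * ‖δh x‖ ^ 2 := by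
      funext x
      rw [norm_sub_sq_real, real_inner_smul_right, norm_smul, Real.norm_eq_abs,
        mul_pow, sq_abs]
      ring
    rw [heq]
    exact (huh.sub ((hinnh.const_mul (2 * c)))).add (hδh.const_mul (c ^ 2))
  -- star side bound
  have hstar : ∫ x, (⟪us x, δs x⟫ - α * ‖us x‖ ^ 2) ∂μs
      ≤ (∫ x, ‖δs x‖ ^ 2 ∂μs) / (4 * α) := by
    have := integral_mono hIstar (hδs.div_const (4 * α))
      (fun x => cosim_aux_star α hα (us x) (δs x))
    rwa [integral_div] at this
  -- hat side bound
  have hhat : (∫ x, ‖δh x‖ ^ 2 ∂μh) / (4 * α * (1 + lam) ^ 2)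
      - α * (2 + lam) / 2 * ∫ x, ‖uh x - c • δh x‖ ^ 2 ∂μh
      ≤ ∫ x, (⟪uh x, δh x⟫ - α * ‖uh x‖ ^ 2) ∂μh := by
    have := integral_mono ((hδh.div_const (4 * α * (1 + lam) ^ 2)).sub
        (heh.const_mul (α * (2 + lam) / 2))) hIhat
      (fun x => cosim_aux_hat α lam c hα hlam hc (uh x) (δh x))
    simp only [Pi.sub_apply] at this
    rwa [integral_sub (hδh.div_const _) (heh.const_mul _), integral_div,
      integral_const_mul] at this
  -- combine
  have hehnn : 0 ≤ ∫ x, ‖uh x - c • δh x‖ ^ 2 ∂μh :=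
    integral_nonneg fun x => by positivity
  have hcoef : (0:ℝ) ≤ α * (2 + lam) / 2 := by positivity
  have hkey : (∫ x, ‖δh x‖ ^ 2 ∂μh) / (4 * α * (1 + lam) ^ 2)
      ≤ (∫ x, ‖δs x‖ ^ 2 ∂μs) / (4 * α) + α * (2 + lam) / 2 * ε ^ 2 := by
    have h2 : α * (2 + lam) / 2 * ∫ x, ‖uh x - c • δh x‖ ^ 2 ∂μh
        ≤ α * (2 + lam) / 2 * ε ^ 2 := mul_le_mul_of_nonneg_left hacc_h hcoef
    linarith
  have hpos : (0:ℝ) < 4 * α * (1 + lam) ^ 2 := by positivity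
  rw [div_le_iff₀ hpos] at hkey
  calc ∫ x, ‖δh x‖ ^ 2 ∂μh
      ≤ ((∫ x, ‖δs x‖ ^ 2 ∂μs) / (4 * α) + α * (2 + lam) / 2 * ε ^ 2)
          * (4 * α * (1 + lam) ^ 2) := hkey
    _ = (1 + lam) ^ 2 * ∫ x, ‖δs x‖ ^ 2 ∂μs
        + 2 * α ^ 2 * (1 + lam) ^ 2 * (2 + lam) * ε ^ 2 := by
        field_simp; ring
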